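/- Let F > 0 and 0 < H_R < 1 with √H_R + H_R > F. Then H_c < F√H_R/(√H_R + 1) < H_R, where H_c := F√(H_R(H_R+√H_R+1))/(√6(√H_R+1)). -/
import Mathlib


open Real

/-- The positive critical point `H_c := F√(H_R(H_R+√H_R+1))/(√6(√H_R+1))` of the
cubic `f_{F,H_R}`. -/
noncomputable def Hc (F HR : ℝ) : ℝ :=
  F * Real.sqrt (HR * (HR + Real.sqrt HR + 1)) / (Real.sqrt 6 * (Real.sqrt HR + 1))

/-- In the smooth-profile regime, `H_c < F√H_R/(√H_R+1) < H_R`. -/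
theorem Hc_lt_HR (F HR : ℝ) (hF : 0 < F) (h0 : 0 < HR) (h1 : HR < 1)
    (hdom : Real.sqrt HR + HR > F) :
    Hc F HR < F * Real.sqrt HR / (Real.sqrt HR + 1) ∧
      F * Real.sqrt HR / (Real.sqrt HR + 1) < HR := by
  have hs : 0 < Real.sqrt HR := Real.sqrt_pos.mpr h0
  have hs1 : Real.sqrt HR < 1 := by
    rw [show (1:ℝ) = Real.sqrt 1 by simp]
    exact Real.sqrt_lt_sqrt h0.le h1
  have hsq : Real.sqrt HR * Real.sqrt HR = HR := Real.mul_self_sqrt h0.le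
  constructor
  · unfold Hc
    rw [div_lt_div_iff₀ (by positivity) (by positivity)]
    have key : Real.sqrt (HR * (HR + Real.sqrt HR + 1)) < Real.sqrt 6 * Real.sqrt HR := by
      rw [← Real.sqrt_mul (by norm_num : (0:ℝ) ≤ 6)]
      exact Real.sqrt_lt_sqrt (by positivity) (by nlinarith)
    have h2 := mul_lt_mul_of_pos_left key
      (show 0 < F * (Real.sqrt HR + 1) by positivity)
    nlinarith [h2]
  · rw [div_lt_iff₀ (by positivity)]
    nlinarith [hs, hdom, hsq]
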